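/- arXiv:1911.01974 — 2 statements merged into one kernel-verified Lean document; each statement's English description precedes it below -/
import Mathlib

section
/- Let U be a clopen subset of the boundary ∂T of T_{d,k}, and suppose U admits two partitions into boundary balls, one with n₁ balls and one with n₂ balls. Then n₁ ≡ n₂ (mod d−1). -/
open scoped Classical

/-- A point of the boundary `∂T_{d,k}`: a first step in `Fin k` followed by an infinite
sequence of steps in `Fin d`. -/
abbrev Ray (d k : ℕ) := Fin k × (ℕ → Fin d)

/-- The boundary ball below the non-root vertex `v = (i, l)`: all rays starting with `i`
whose sequence of steps begins with the path `l`. -/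
def ball (d k : ℕ) (v : Fin k × List (Fin d)) : Set (Ray d k) :=
  {r | r.1 = v.1 ∧ ∀ (m : ℕ) (hm : m < v.2.length), r.2 m = v.2.get ⟨m, hm⟩}

/-- Canonical ray extending a depth-`N` prefix, padding with `0`. -/
def canon (d k N : ℕ) (hd : 0 < d) (w : Fin k × (Fin N → Fin d)) : Ray d k :=
  (w.1, fun n => if h : n < N then w.2 ⟨n, h⟩ else ⟨0, hd⟩)

lemma canon_mem_ball (d k N : ℕ) (hd : 0 < d) (v : Fin k × List (Fin d))
    (hv : v.2.length ≤ N) (w : Fin k × (Fin N → Fin d)) :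
    canon d k N hd w ∈ ball d k v ↔
      w.1 = v.1 ∧ ∀ (m : ℕ) (hm : m < v.2.length),
        w.2 ⟨m, lt_of_lt_of_le hm hv⟩ = v.2.get ⟨m, hm⟩ := by
  constructor
  · rintro ⟨h1, h2⟩
    refine ⟨h1, fun m hm => ?_⟩
    have := h2 m hm
    simpa [canon, dif_pos (lt_of_lt_of_le hm hv)] using this
  · rintro ⟨h1, h2⟩
    refine ⟨h1, fun m hm => ?_⟩
    have := h2 m hm
    simpa [canon, dif_pos (lt_of_lt_of_le hm hv)] using this

/-- The number of depth-`N` prefixes whose canonical ray lies in the ball below `v`. -/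
lemma card_canon_ball (d k N : ℕ) (hd : 0 < d) (v : Fin k × List (Fin d))
    (hv : v.2.length ≤ N) :
    (Finset.univ.filter
        (fun w : Fin k × (Fin N → Fin d) => canon d k N hd w ∈ ball d k v)).card
      = d ^ (N - v.2.length) := by
  classical
  rw [← Fintype.card_subtype]
  have e : {w : Fin k × (Fin N → Fin d) // canon d k N hd w ∈ ball d k v}
      ≃ (Fin (N - v.2.length) → Fin d) :=
    { toFun := fun w j => w.1.2 ⟨v.2.length + j.1, by omega⟩
      invFun := fun g =>
        ⟨(v.1, fun m => if h : m.1 < v.2.length then v.2.get ⟨m.1, h⟩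
            else g ⟨m.1 - v.2.length, by omega⟩), by
          rw [canon_mem_ball d k N hd v hv]
          exact ⟨rfl, fun m hm => by simp [dif_pos hm]⟩⟩
      left_inv := by
        rintro ⟨⟨a, f⟩, hw⟩
        rw [canon_mem_ball d k N hd v hv] at hw
        obtain ⟨h1, h2⟩ := hw
        apply Subtype.ext
        refine Prod.ext h1.symm ?_
        funext m
        by_cases h : m.1 < v.2.length
        · simp only [dif_pos h]
          exact (h2 m.1 h).symm.trans (congrArg f (Fin.ext rfl))
        · simp only [dif_neg h]
          exact congrArg f (Fin.ext (by simp; omega))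
      right_inv := by
        intro g
        funext j
        simp only
        rw [dif_neg (by omega)]
        exact congrArg g (Fin.ext (by simp)) }
  rw [Fintype.card_congr e]
  simp

lemma key (d k N : ℕ) (hd : 2 ≤ d) (U : Set (Ray d k)) (n : ℕ)
    (b : Fin n → Fin k × List (Fin d))
    (hb : ∀ i, (b i).2.length ≤ N)
    (hdisj : ∀ i j : Fin n, i ≠ j → Disjoint (ball d k (b i)) (ball d k (b j)))
    (hU : U = ⋃ i, ball d k (b i)) :
    ((Finset.univ.filter
        (fun w : Fin k × (Fin N → Fin d) =>
          canon d k N (by omega) w ∈ U)).card : ZMod (d - 1)) = n := by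
  classical
  have hd0 : 0 < d := by omega
  have hsplit : Finset.univ.filter
      (fun w : Fin k × (Fin N → Fin d) => canon d k N hd0 w ∈ U)
      = Finset.univ.biUnion
        (fun i : Fin n => Finset.univ.filter
          (fun w : Fin k × (Fin N → Fin d) => canon d k N hd0 w ∈ ball d k (b i))) := by
    ext w
    simp [hU, Set.mem_iUnion]
  rw [hsplit, Finset.card_biUnion]
  · have hcast : (d : ZMod (d - 1)) = 1 := by
      have : d = (d - 1) + 1 := by omega
      rw [this]
      push_cast
      simp
    push_cast
    calc (∑ i : Fin n, ((Finset.univ.filter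
          (fun w : Fin k × (Fin N → Fin d) =>
            canon d k N hd0 w ∈ ball d k (b i))).card : ZMod (d - 1)))
        = ∑ _i : Fin n, (1 : ZMod (d - 1)) := by
          refine Finset.sum_congr rfl fun i _ => ?_
          rw [card_canon_ball d k N hd0 (b i) (hb i)]
          push_cast
          rw [hcast, one_pow]
      _ = n := by simp
  · intro i _ j _ hij
    refine Finset.disjoint_left.2 fun w hwi hwj => ?_
    simp only [Finset.mem_filter] at hwi hwj
    exact Set.disjoint_left.1 (hdisj i j hij) hwi.2 hwj.2

/-- If a clopen subset `U` of `∂T_{d,k}` admits two partitions into boundary balls,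
one with `n₁` balls and one with `n₂` balls, then `n₁ ≡ n₂ (mod d-1)`. -/
theorem stmt2 (d k : ℕ) (hd : 2 ≤ d) (hk : 1 ≤ k)
    (U : Set (Ray d k)) (hU : IsClopen U)
    (n₁ n₂ : ℕ)
    (b₁ : Fin n₁ → Fin k × List (Fin d)) (b₂ : Fin n₂ → Fin k × List (Fin d))
    (hdisj₁ : ∀ i j : Fin n₁, i ≠ j → Disjoint (ball d k (b₁ i)) (ball d k (b₁ j)))
    (hdisj₂ : ∀ i j : Fin n₂, i ≠ j → Disjoint (ball d k (b₂ i)) (ball d k (b₂ j)))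
    (hU₁ : U = ⋃ i, ball d k (b₁ i))
    (hU₂ : U = ⋃ i, ball d k (b₂ i)) :
    n₁ ≡ n₂ [MOD d - 1] := by
  classical
  set N : ℕ := (Finset.univ.sup fun i => (b₁ i).2.length)
      ⊔ (Finset.univ.sup fun i => (b₂ i).2.length) with hN
  have hb₁ : ∀ i, (b₁ i).2.length ≤ N := fun i =>
    le_sup_of_le_left (Finset.le_sup (f := fun i => (b₁ i).2.length) (Finset.mem_univ i))
  have hb₂ : ∀ i, (b₂ i).2.length ≤ N := fun i =>
    le_sup_of_le_right (Finset.le_sup (f := fun i => (b₂ i).2.length) (Finset.mem_univ i))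
  have h₁ := key d k N hd U n₁ b₁ hb₁ hdisj₁ hU₁
  have h₂ := key d k N hd U n₂ b₂ hb₂ hdisj₂ hU₂
  exact (ZMod.natCast_eq_natCast_iff _ _ _).1 (h₁.symm.trans h₂)
end

section
/- Let G be a group acting faithfully by homeomorphisms on a space X. Suppose g = g_e · g_h and f = f_e · f_h where supp(g_e) ∩ supp(g_h) = ∅ and supp(f_e) ∩ supp(f_h) = ∅, and suppose a⁻¹ g a = f for some a ∈ G with a(supp(f_e)) = supp(g_e) and a(supp(f_h)) = supp(g_h). Then a⁻¹ g_e a = f_e and a⁻¹ g_h a = f_h. -/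
variable {X : Type*} [TopologicalSpace X]

/-- The support of a homeomorphism: the closure of its set of non-fixed points. -/
def suppH (g : X ≃ₜ X) : Set X := closure {x : X | g x ≠ x}

lemma suppH_mem_of_ne {g : X ≃ₜ X} {x : X} (h : g x ≠ x) : x ∈ suppH g :=
  subset_closure h

lemma suppH_map {g : X ≃ₜ X} {x : X} (hig : ∀ x ∉ suppH g, g x = x)
    (hx : x ∈ suppH g) : g x ∈ suppH g := by
  by_contra hgx
  have h2 : g (g x) = g x := hig _ hgx
  have : g x = x := g.injective h2
  rw [this] at hgx
  exact hgx hx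

/-- If `g = g_e · g_h` and `f = f_e · f_h` are decompositions into factors with disjoint
clopen supports, each factor the identity off its support, and `a⁻¹ g a = f` with
`a(supp f_e) = supp g_e` and `a(supp f_h) = supp g_h`, then `a⁻¹ g_e a = f_e` and
`a⁻¹ g_h a = f_h`. -/
theorem stmt9 (g ge gh f fe fh a : X ≃ₜ X)
    (hg : ∀ x, g x = ge (gh x)) (hf : ∀ x, f x = fe (fh x))
    (hdg : Disjoint (suppH ge) (suppH gh)) (hdf : Disjoint (suppH fe) (suppH fh))
    (hcge : IsClopen (suppH ge)) (hcgh : IsClopen (suppH gh))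
    (hcfe : IsClopen (suppH fe)) (hcfh : IsClopen (suppH fh))
    (hige : ∀ x ∉ suppH ge, ge x = x) (high : ∀ x ∉ suppH gh, gh x = x)
    (hife : ∀ x ∉ suppH fe, fe x = x) (hifh : ∀ x ∉ suppH fh, fh x = x)
    (hconj : ∀ x, a.symm (g (a x)) = f x)
    (hae : ⇑a '' suppH fe = suppH ge) (hah : ⇑a '' suppH fh = suppH gh) :
    (∀ x, a.symm (ge (a x)) = fe x) ∧ (∀ x, a.symm (gh (a x)) = fh x) := by
  constructor
  · intro x
    by_cases hx : x ∈ suppH fe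
    · -- a x ∈ supp ge, so gh fixes a x; x ∉ supp fh, so fh fixes x
      have hax : a x ∈ suppH ge := by rw [← hae]; exact ⟨x, hx, rfl⟩
      have hax2 : a x ∉ suppH gh := fun h => hdg.ne_of_mem hax h rfl
      have h1 : gh (a x) = a x := high _ hax2
      have hx2 : x ∉ suppH fh := fun h => hdf.ne_of_mem hx h rfl
      have h2 : fh x = x := hifh _ hx2
      have := hconj x
      rw [hg, h1, hf, h2] at this
      exact this
    · have hax : a x ∉ suppH ge := by
        rw [← hae]
        rintro ⟨y, hy, hxy⟩
        exact hx (a.injective hxy ▸ hy)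
      rw [hige _ hax, a.symm_apply_apply, hife _ hx]
  · intro x
    by_cases hx : x ∈ suppH fh
    · have hax : a x ∈ suppH gh := by rw [← hah]; exact ⟨x, hx, rfl⟩
      have hgh : gh (a x) ∈ suppH gh := suppH_map high hax
      have h1 : ge (gh (a x)) = gh (a x) :=
        hige _ (fun h => hdg.ne_of_mem h hgh rfl)
      have hfhx : fh x ∈ suppH fh := suppH_map hifh hx
      have h2 : fe (fh x) = fh x :=
        hife _ (fun h => hdf.ne_of_mem h hfhx rfl)
      have := hconj x
      rw [hg, h1, hf, h2] at this
      exact this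
    · have hax : a x ∉ suppH gh := by
        rw [← hah]
        rintro ⟨y, hy, hxy⟩
        exact hx (a.injective hxy ▸ hy)
      rw [high _ hax, a.symm_apply_apply, hifh _ hx]
end
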